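/- Let N ≥ 3, and consider the map f on (ℝ⁵)^N defining the symmetric-case multi-agent motivation dynamics: for each k, ẏ_k = ((1+m_k)/2)(u − y_k) + ((1−m_k)/2)((1/N)∑_{j≠k} R^{j−k} y_j − ((N−1)/N) y_k), ṁ_k = σ(1−m_k²)(m_k + 3(v_{k,1}−v_{k,2})/(v_{k,1}+v_{k,2})), v̇_{k,1} = λ(½‖y_k − u‖² − v_{k,1}), v̇_{k,2} = λ(((N−1)/(2N))‖y_k − (1/(N−1))∑_{j≠k} R^{j−k} y_j‖² − v_{k,2}), where R is rotation by 2π/N and u = (1,0). Then f is equivariant under the cyclic group C_N acting by cyclically shifting the agent indices: for the shift-by-one permutation γ, f(γ·Z) = γ·f(Z). -/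

import Mathlib

open Real Matrix Finset

/-- Rotation matrix by angle `2π/N`. -/
noncomputable def rotN (N : ℕ) : Matrix (Fin 2) (Fin 2) ℝ :=
  !![Real.cos (2 * π / N), -Real.sin (2 * π / N);
     Real.sin (2 * π / N), Real.cos (2 * π / N)]

/-- `R^{j-k}` with the exponent taken mod `N`. -/
noncomputable def rotPow (N : ℕ) (j k : Fin N) : Matrix (Fin 2) (Fin 2) ℝ :=
  rotN N ^ ((((j : ℤ) - (k : ℤ)) % (N : ℤ)).toNat)

/-- The state of one agent: physical position `y ∈ ℝ²`, motivation `m ∈ ℝ`, values `v₁, v₂`. -/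
abbrev AgentState := (Fin 2 → ℝ) × ℝ × ℝ × ℝ

/-- Designated point `u = (1,0)`. -/
def uvec : Fin 2 → ℝ := ![1, 0]

/-- The symmetric-case multi-agent motivation dynamics vector field. -/
noncomputable def motivationDynamics (N : ℕ) (σ lam : ℝ)
    (Z : Fin N → AgentState) : Fin N → AgentState := fun k =>
  let y : Fin N → (Fin 2 → ℝ) := fun j => (Z j).1
  let m : ℝ := (Z k).2.1
  let v1 : ℝ := (Z k).2.2.1
  let v2 : ℝ := (Z k).2.2.2
  let φ1 : ℝ := (1 / 2) * ∑ i, (y k i - uvec i) ^ 2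
  let cent : Fin 2 → ℝ := (1 / ((N : ℝ) - 1)) • ∑ j ∈ univ \ {k}, rotPow N j k *ᵥ y j
  let φ2 : ℝ := (((N : ℝ) - 1) / (2 * N)) * ∑ i, (y k i - cent i) ^ 2
  ( ((1 + m) / 2) • (uvec - y k)
      + ((1 - m) / 2) • ((1 / (N : ℝ)) • ∑ j ∈ univ \ {k}, rotPow N j k *ᵥ y j
          - (((N : ℝ) - 1) / N) • y k),
    σ * (1 - m ^ 2) * (m + 3 * (v1 - v2) / (v1 + v2)),
    lam * (φ1 - v1),
    lam * (φ2 - v2) )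

/-- The cyclic shift-by-one action: `(γ·Z)ₖ = Z_{k-1}`, i.e. `(z₁,…,z_N) ↦ (z_N, z₁,…,z_{N-1})`. -/
def shiftOne {N : ℕ} [NeZero N] (Z : Fin N → AgentState) : Fin N → AgentState :=
  fun k => Z (k - 1)

/-! The coupling matrix `R^{j-k}` depends only on `j - k` in `ℤ/N`, so reindexing the
neighbour sums by `j ↦ j - 1` turns the field at agent `k` of the shifted state into the field
at agent `k - 1` of the original one; every other term is local to the agent. -/

lemma Finset.sum_sdiff_singleton_comp_sub {G M : Type*} [AddGroup G] [Fintype G] [DecidableEq G]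
    [AddCommMonoid M] (f : G → M) (k c : G) :
    ∑ j ∈ univ \ {k}, f (j - c) = ∑ j ∈ univ \ {k - c}, f j :=
  Finset.sum_equiv (Equiv.subRight c) (by simp) (fun _ _ => rfl)

lemma rotPow_eq_pow_val_sub (N : ℕ) (j k : Fin N) : rotPow N j k = rotN N ^ (j - k : Fin N).val := by
  rw [rotPow, ← Fin.coe_int_sub_eq_mod, Int.toNat_natCast]

lemma rotPow_sub_sub (N : ℕ) [NeZero N] (j k c : Fin N) :
    rotPow N (j - c) (k - c) = rotPow N j k := by
  simp only [rotPow_eq_pow_val_sub, sub_sub_sub_cancel_right]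

lemma sum_rotPow_mulVec_comp_sub_one (N : ℕ) [NeZero N] (y : Fin N → Fin 2 → ℝ) (k : Fin N) :
    ∑ j ∈ univ \ {k}, rotPow N j k *ᵥ y (j - 1)
      = ∑ j ∈ univ \ {k - 1}, rotPow N j (k - 1) *ᵥ y j := by
  rw [← Finset.sum_sdiff_singleton_comp_sub _ k 1]
  simp only [rotPow_sub_sub]

theorem motivationDynamics_equivariant_general (N : ℕ) [NeZero N] (σ lam : ℝ)
    (Z : Fin N → AgentState) :
    motivationDynamics N σ lam (shiftOne Z) = shiftOne (motivationDynamics N σ lam Z) := by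
  funext k
  show _ = motivationDynamics N σ lam Z (k - 1)
  simp only [motivationDynamics, shiftOne]
  rw [sum_rotPow_mulVec_comp_sub_one N (fun j => (Z j).1) k]

theorem motivationDynamics_equivariant (N : ℕ) [NeZero N] (hN : 3 ≤ N) (σ lam : ℝ)
    (hσ : 0 < σ) (hlam : 0 < lam)
    (Z : Fin N → AgentState) (hv : ∀ k, (Z k).2.2.1 + (Z k).2.2.2 ≠ 0) :
    motivationDynamics N σ lam (shiftOne Z) = shiftOne (motivationDynamics N σ lam Z) :=
  motivationDynamics_equivariant_general N σ lam Z
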